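/- arXiv:2405.07355 — 2 statements merged into one kernel-verified Lean document; each statement's English description precedes it below -/
import Mathlib

section
/- Define H(θ, θ∞) = a·θ⁴ - (4a/3)·θ∞·θ³ + (a/3)·θ∞⁴ for constants a > 0, θ∞ > 0 and θ ≥ 0. Then H(θ, θ∞) ≥ 0 with equality iff θ = θ∞; there exists c₁ > 0 with H(θ, θ∞) ≥ c₁·|θ - θ∞|² whenever θ∞/2 < θ < 2θ∞; there exists c₂ > 0 with H(θ, θ∞) ≥ c₂ whenever 0 ≤ θ ≤ θ∞/2; and there exists c₃ > 0 with H(θ, θ∞) ≥ c₃·θ⁴ whenever θ ≥ 2θ∞. -/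
theorem radiative_coercivity (a θinf : ℝ) (ha : 0 < a) (hθinf : 0 < θinf)
    (H : ℝ → ℝ)
    (hH : ∀ θ, H θ = a * θ ^ 4 - (4 * a / 3) * θinf * θ ^ 3 + (a / 3) * θinf ^ 4) :
    (∀ θ ≥ (0:ℝ), 0 ≤ H θ ∧ (H θ = 0 ↔ θ = θinf)) ∧
    (∃ c₁ > (0:ℝ), ∀ θ : ℝ, θinf / 2 < θ → θ < 2 * θinf → c₁ * |θ - θinf| ^ 2 ≤ H θ) ∧
    (∃ c₂ > (0:ℝ), ∀ θ : ℝ, 0 ≤ θ → θ ≤ θinf / 2 → c₂ ≤ H θ) ∧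
    (∃ c₃ > (0:ℝ), ∀ θ : ℝ, 2 * θinf ≤ θ → c₃ * θ ^ 4 ≤ H θ) := by
  refine ⟨?_, ⟨a * θinf ^ 2 / 3, by positivity, ?_⟩,
    ⟨a * θinf ^ 4 / 12, by positivity, ?_⟩, ⟨a / 4, by linarith, ?_⟩⟩
  · intro θ hθ
    rw [hH]
    have hq : (0:ℝ) < 3 * θ ^ 2 + 2 * θinf * θ + θinf ^ 2 := by positivity
    refine ⟨by nlinarith [mul_nonneg (sq_nonneg (θ - θinf)) hq.le], ?_, ?_⟩
    · intro h
      have key : (θ - θinf) ^ 2 * (3 * θ ^ 2 + 2 * θinf * θ + θinf ^ 2) = 0 := by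
        have h3 : a / 3 * ((θ - θinf) ^ 2 * (3 * θ ^ 2 + 2 * θinf * θ + θinf ^ 2)) = 0 := by
          linear_combination h
        rcases mul_eq_zero.mp h3 with h4 | h4
        · exact absurd h4 (by positivity)
        · exact h4
      have h2 : (θ - θinf) ^ 2 = 0 := by
        rcases mul_eq_zero.mp key with h4 | h4
        · exact h4
        · exact absurd h4 hq.ne'
      have := pow_eq_zero_iff (n := 2) (by norm_num) |>.mp h2
      linarith
    · intro h; subst h; ring
  · intro θ h1 h2
    rw [hH, sq_abs]
    nlinarith [sq_nonneg (θ - θinf), mul_pos hθinf (show (0:ℝ) < θ by linarith),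
      mul_nonneg (sq_nonneg (θ - θinf)) (mul_pos hθinf (show (0:ℝ) < θ by linarith)).le,
      mul_nonneg (sq_nonneg (θ - θinf)) (sq_nonneg θ)]
  · intro θ h0 h1
    rw [hH]
    have h2 : θinf ^ 2 / 4 ≤ (θ - θinf) ^ 2 := by nlinarith
    have h3 : θinf ^ 2 ≤ 3 * θ ^ 2 + 2 * θinf * θ + θinf ^ 2 := by nlinarith
    have h4 := mul_le_mul h2 h3 (by positivity) (sq_nonneg _)
    nlinarith [mul_le_mul_of_nonneg_left h4 (by positivity : (0:ℝ) ≤ a / 3)]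
  · intro θ h
    rw [hH]
    have h0 : (0:ℝ) ≤ θ := by linarith
    have h2 : θ ^ 2 / 4 ≤ (θ - θinf) ^ 2 := by nlinarith
    have h3 : 3 * θ ^ 2 ≤ 3 * θ ^ 2 + 2 * θinf * θ + θinf ^ 2 := by nlinarith [mul_nonneg hθinf.le h0]
    have h4 := mul_le_mul h2 h3 (by positivity) (sq_nonneg _)
    nlinarith [mul_le_mul_of_nonneg_left h4 (by positivity : (0:ℝ) ≤ a / 3)]
end

section
/- Let θ, θ∞ > 0 and suppose θ - θ∞ ∈ L²(Ω) and H(θ,θ∞) = aθ⁴ - (4a/3)θ∞θ³ + (a/3)θ∞⁴ ∈ L¹(Ω). Then θ⁴ - 4θ∞³(θ - θ∞) - θ∞⁴ ∈ L¹(Ω); in fact |θ⁴ - 4θ∞³(θ - θ∞) - θ∞⁴| ≤ C·(H(θ,θ∞) + |θ - θ∞|²) pointwise for a constant C depending only on a and θ∞. -/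
open MeasureTheory

theorem taylor_remainder_integrable (a θinf : ℝ) (ha : 0 < a) (hθinf : 0 < θinf)
    (Ω : Set (EuclideanSpace ℝ (Fin 3))) (hΩ : MeasurableSet Ω)
    (θ : EuclideanSpace ℝ (Fin 3) → ℝ) (hθ : ∀ x, 0 < θ x)
    (hL2 : IntegrableOn (fun x => (θ x - θinf) ^ 2) Ω)
    (hH : IntegrableOn
      (fun x => a * (θ x) ^ 4 - (4 * a / 3) * θinf * (θ x) ^ 3 + (a / 3) * θinf ^ 4) Ω) :
    (∃ C > (0:ℝ), ∀ s : ℝ, 0 ≤ s →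
      |s ^ 4 - 4 * θinf ^ 3 * (s - θinf) - θinf ^ 4|
        ≤ C * ((a * s ^ 4 - (4 * a / 3) * θinf * s ^ 3 + (a / 3) * θinf ^ 4)
              + (s - θinf) ^ 2)) ∧
    IntegrableOn (fun x => (θ x) ^ 4 - 4 * θinf ^ 3 * (θ x - θinf) - θinf ^ 4) Ω := by
  have hCpos : 0 < 3 / a + 2 * θinf ^ 2 := by positivity
  -- pointwise bound for all real s
  have key : ∀ s : ℝ,
      |s ^ 4 - 4 * θinf ^ 3 * (s - θinf) - θinf ^ 4|
        ≤ (3 / a + 2 * θinf ^ 2) *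
          ((a * s ^ 4 - (4 * a / 3) * θinf * s ^ 3 + (a / 3) * θinf ^ 4)
            + (s - θinf) ^ 2) := by
    intro s
    have hf : 0 ≤ s ^ 4 - 4 * θinf ^ 3 * (s - θinf) - θinf ^ 4 := by
      nlinarith [sq_nonneg ((s - θinf) * (s + θinf)), sq_nonneg (θinf * (s - θinf))]
    have hH0 : 0 ≤ a * s ^ 4 - (4 * a / 3) * θinf * s ^ 3 + (a / 3) * θinf ^ 4 := by
      nlinarith [mul_nonneg ha.le (sq_nonneg ((s - θinf) * (3 * (s - θinf) + 4 * θinf))),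
        mul_nonneg ha.le (sq_nonneg (θinf * (s - θinf)))]
    rw [abs_of_nonneg hf]
    have e1 : (3 / a) * (a * s ^ 4 - (4 * a / 3) * θinf * s ^ 3 + (a / 3) * θinf ^ 4)
        = 3 * s ^ 4 - 4 * θinf * s ^ 3 + θinf ^ 4 := by
      field_simp
    have step : s ^ 4 - 4 * θinf ^ 3 * (s - θinf) - θinf ^ 4
        ≤ 3 * s ^ 4 - 4 * θinf * s ^ 3 + θinf ^ 4 + 2 * θinf ^ 2 * (s - θinf) ^ 2 := by
      nlinarith [sq_nonneg (s * (s - θinf))]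
    have h1 : 0 ≤ (3 / a) * (s - θinf) ^ 2 := by positivity
    have h2 : 0 ≤ 2 * θinf ^ 2 *
        (a * s ^ 4 - (4 * a / 3) * θinf * s ^ 3 + (a / 3) * θinf ^ 4) := by positivity
    have expand : (3 / a + 2 * θinf ^ 2) *
          ((a * s ^ 4 - (4 * a / 3) * θinf * s ^ 3 + (a / 3) * θinf ^ 4)
            + (s - θinf) ^ 2)
        = (3 / a) * (a * s ^ 4 - (4 * a / 3) * θinf * s ^ 3 + (a / 3) * θinf ^ 4)
          + (3 / a) * (s - θinf) ^ 2
          + 2 * θinf ^ 2 * (a * s ^ 4 - (4 * a / 3) * θinf * s ^ 3 + (a / 3) * θinf ^ 4)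
          + 2 * θinf ^ 2 * (s - θinf) ^ 2 := by ring
    rw [expand, e1]
    linarith
  refine ⟨⟨3 / a + 2 * θinf ^ 2, hCpos, fun s _ => key s⟩, ?_⟩
  -- integrability
  have ha' : a ≠ 0 := ha.ne'
  have hgeq : (fun x => (θ x) ^ 4 - 4 * θinf ^ 3 * (θ x - θinf) - θinf ^ 4)
      = fun x => (3 / (2 * a)) *
          (a * (θ x) ^ 4 - (4 * a / 3) * θinf * (θ x) ^ 3 + (a / 3) * θinf ^ 4)
        - (1 / 2) * ((θ x - θinf) ^ 2 * (θ x - θinf) ^ 2)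
        + 3 * θinf ^ 2 * (θ x - θinf) ^ 2 := by
    funext x
    field_simp
    ring
  have hmeas : AEStronglyMeasurable
      (fun x => (θ x) ^ 4 - 4 * θinf ^ 3 * (θ x - θinf) - θinf ^ 4)
      (volume.restrict Ω) := by
    rw [hgeq]
    exact (((hH.aestronglyMeasurable.const_mul _).sub
      ((hL2.aestronglyMeasurable.mul hL2.aestronglyMeasurable).const_mul _)).add
      (hL2.aestronglyMeasurable.const_mul _))
  have hbound : Integrable
      (fun x => (3 / a + 2 * θinf ^ 2) *
        ((a * (θ x) ^ 4 - (4 * a / 3) * θinf * (θ x) ^ 3 + (a / 3) * θinf ^ 4)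
          + (θ x - θinf) ^ 2)) (volume.restrict Ω) :=
    (hH.add hL2).const_mul _
  refine hbound.mono' hmeas ?_
  filter_upwards with x
  rw [Real.norm_eq_abs]
  exact key (θ x)
end
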